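/- Let p ∈ ℝ⁴ ≅ ℍ, λ > 0, and let g_{12,p}(x) = (x−p)/|x−p| ∈ Sp(1) for x ≠ p. Then on the overlap {x : 0 < |x−p| < 1}, the two gauges of the 1-instanton satisfy the gluing relation I²_{λ,p}(x) = g_{12,p}(x)⁻¹ dg_{12,p}(x) + g_{12,p}(x)⁻¹ I¹_{λ,p}(x) g_{12,p}(x), where I¹_{λ,p}(x) = Im((x−p)dx̄/(λ²+|x−p|²)) and I²_{λ,p}(x) = Im(λ²(x̄−p̄)dx/(|x−p|²(λ²+|x−p|²))). -/

import Mathlib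

noncomputable section
open MeasureTheory Metric Filter Real Set
open scoped RealInnerProductSpace Topology

/-- ℝ⁴ identified with the quaternions ℍ. -/
abbrev H4 := Quaternion ℝ
instance : MeasurableSpace H4 := borel H4
instance : BorelSpace H4 := ⟨rfl⟩

/-- An su(2) ≅ Im ℍ-valued 1-form on (a subset of) ℝ⁴ ≅ ℍ, given by its components. -/
abbrev Form := H4 → Fin 4 → H4

/-- The standard orthonormal basis 1, i, j, k of ℍ over ℝ. -/
def e4 : Fin 4 → H4 := ![1, ⟨0,1,0,0⟩, ⟨0,0,1,0⟩, ⟨0,0,0,1⟩]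
/-- Coordinates with respect to the basis 1, i, j, k. -/
def coord4 : Fin 4 → H4 → ℝ := ![fun x => x.re, fun x => x.imI, fun x => x.imJ, fun x => x.imK]
/-- The three imaginary (su(2)) components. -/
def qc3 : Fin 3 → H4 → ℝ := ![fun x => x.imI, fun x => x.imJ, fun x => x.imK]

/-- The su(2) inner product (X,Y) = −Tr(XY) = 2⟨x,y⟩ on imaginary quaternions. -/
def innerIm (X Y : H4) : ℝ := 2 * (X * star Y).re
/-- The su(2) norm squared. -/
def nsq (X : H4) : ℝ := innerIm X X
/-- Tr(XY) for imaginary quaternions X, Y. -/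
def trXY (X Y : H4) : ℝ := 2 * (X * Y).re

/-- A smooth su(2)-valued 1-form (smooth components, imaginary values). -/
def IsSmoothForm (A : Form) : Prop :=
  (∀ i, ContDiff ℝ (⊤ : ℕ∞) (fun x => A x i)) ∧ ∀ x i, (A x i).re = 0

/-- Evaluation of a 1-form on a tangent vector. -/
def evalF (A : Form) (x v : H4) : H4 := ∑ i, coord4 i v • A x i

/-- Components of the curvature F_A^ε = dA + (ε/2)[A,A]. -/
def curv (ε : ℝ) (A : Form) (x : H4) (i j : Fin 4) : H4 :=
  fderiv ℝ (fun y => A y j) x (e4 i) - fderiv ℝ (fun y => A y i) x (e4 j)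
    + ε • (A x i * A x j - A x j * A x i)

/-- Pointwise norm squared of a 2-form (components). -/
def tnsq (w : Fin 4 → Fin 4 → H4) : ℝ := (1/2) * ∑ i, ∑ j, nsq (w i j)
/-- Pointwise inner product of two 2-forms (components). -/
def tinner (w w' : Fin 4 → Fin 4 → H4) : ℝ := (1/2) * ∑ i, ∑ j, innerIm (w i j) (w' i j)

/-- The ε-Yang–Mills functional YM_ε(A) = ∫_{B⁴} |F_A^ε|². -/
def ym (ε : ℝ) (A : Form) : ℝ := ∫ x in ball (0:H4) 1, tnsq (curv ε A x)

/-- Components of d_A^{*ε} F_A^ε. -/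
def dStarF (ε : ℝ) (A : Form) (x : H4) (j : Fin 4) : H4 :=
  ∑ i, (fderiv ℝ (fun y => curv ε A y i j) x (e4 i)
        + ε • (A x i * curv ε A x i j - curv ε A x i j * A x i))

/-- A gauge transformation: a smooth Sp(1) ≅ SU(2)-valued map on the closed ball. -/
def IsGauge (u : H4 → H4) : Prop :=
  ContDiff ℝ (⊤ : ℕ∞) u ∧ ∀ x ∈ closedBall (0:H4) 1, ‖u x‖ = 1

/-- The gauge action A ↦ u⁻¹du + u⁻¹Au (u⁻¹ = star u for unit quaternions). -/
def gaugeAct (u : H4 → H4) (A : Form) : Form :=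
  fun x i => star (u x) * fderiv ℝ u x (e4 i) + star (u x) * A x i * u x

/-- ι*A is gauge equivalent to A₀ on ∂B⁴ via a gauge transformation extending to B⁴:
the tangential parts agree on the unit sphere after a gauge transformation. -/
def BValue (A A0 : Form) : Prop :=
  ∃ u : H4 → H4, IsGauge u ∧ ∀ x ∈ sphere (0:H4) 1, ∀ v : H4, ⟪x, v⟫ = 0 →
    evalF (gaugeAct u A) x v = evalF A0 x v

/-- The ε-Dirichlet problem (D_ε): d_A^{*ε} F_A^ε = 0 in B⁴, ι*A ∼ A₀ at ∂B⁴. -/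
def SolvesD (ε : ℝ) (A A0 : Form) : Prop :=
  IsSmoothForm A ∧ (∀ x ∈ ball (0:H4) 1, ∀ j, dStarF ε A x j = 0) ∧ BValue A A0

/-- Density of Tr(F_A^ε ∧ F_A^ε). -/
def chernDens (ε : ℝ) (A : Form) (x : H4) : ℝ :=
  2 * (trXY (curv ε A x 0 1) (curv ε A x 2 3)
     - trXY (curv ε A x 0 2) (curv ε A x 1 3)
     + trXY (curv ε A x 0 3) (curv ε A x 1 2))

/-- Relative second Chern number of A with respect to a reference connection. -/
def relC2 (ε : ℝ) (A Aref : Form) : ℝ :=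
  (ε^2 / (8 * π^2)) *
    ((∫ x in ball (0:H4) 1, chernDens ε A x) - (∫ x in ball (0:H4) 1, chernDens ε Aref x))

/-- The small solution: an absolute minimizer of YM_ε with boundary value A₀. -/
def IsSmallSolution (ε : ℝ) (Au A0 : Form) : Prop :=
  SolvesD ε Au A0 ∧
  ∀ B : Form, IsSmoothForm B → BValue B A0 → ym ε Au ≤ ym ε B

/-- A solution of (D_ε) lying in 𝒜₊₁(A₀): relative c₂ = 1 w.r.t. the small solution. -/
def SolvesDplus1 (ε : ℝ) (A A0 Asmall : Form) : Prop :=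
  SolvesD ε A A0 ∧ relC2 ε A Asmall = 1

/-- Curvature of the boundary connection evaluated on (tangent) vectors. -/
def curvVal (A : Form) (x v w : H4) : H4 :=
  fderiv ℝ (fun y => evalF A y w) x v - fderiv ℝ (fun y => evalF A y v) x w
    + (evalF A x v * evalF A x w - evalF A x w * evalF A x v)

/-- A₀ is non-flat: its curvature on ∂B⁴ is nonzero at some point in tangential directions. -/
def NonFlat (A0 : Form) : Prop :=
  ∃ x ∈ sphere (0:H4) 1, ∃ v w : H4, ⟪x, v⟫ = 0 ∧ ⟪x, w⟫ = 0 ∧ curvVal A0 x v w ≠ 0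

/-- h is the (componentwise) harmonic extension to B⁴ of the boundary data bd. -/
def IsHarmExt (bd : H4 → Fin 4 → H4) (h : Form) : Prop :=
  (∀ i, ContDiffOn ℝ (⊤ : ℕ∞) (fun x => h x i) (ball (0:H4) 1)) ∧
  (∀ i, ContinuousOn (fun x => h x i) (closedBall (0:H4) 1)) ∧
  (∀ x ∈ ball (0:H4) 1, ∀ i,
      ∑ k, fderiv ℝ (fun y => fderiv ℝ (fun z => h z i) y (e4 k)) x (e4 k) = 0) ∧
  (∀ x ∈ sphere (0:H4) 1, ∀ i, h x i = bd x i)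

/-- Boundary data Im((x̄−p̄)dx/|x−p|⁴) of h_p. -/
def hpBD (p : H4) : H4 → Fin 4 → H4 :=
  fun x i => (‖x - p‖^4)⁻¹ • ((star x - star p) * e4 i).im

/-- Levi-Civita symbol on Fin 4. -/
def lev (i j k l : Fin 4) : ℝ :=
  Matrix.det (Matrix.of fun r c => if ![i,j,k,l] r = c then (1:ℝ) else 0)
/-- Hodge star of a 2-form (components). -/
def hodge2 (w : Fin 4 → Fin 4 → H4) (i j : Fin 4) : H4 :=
  (1/2 : ℝ) • ∑ k, ∑ l, lev i j k l • w k l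
/-- Anti-self-dual part ω⁻ = (ω − *ω)/2 of a 2-form. -/
def asd (w : Fin 4 → Fin 4 → H4) (i j : Fin 4) : H4 := (1/2 : ℝ) • (w i j - hodge2 w i j)

/-- Exterior derivative of a 1-form, components. -/
def dd (h : Form) (x : H4) (i j : Fin 4) : H4 :=
  fderiv ℝ (fun y => h y j) x (e4 i) - fderiv ℝ (fun y => h y i) x (e4 j)

/-- F(p) = ∫_{B⁴} |(dh_p)⁻|², given the family p ↦ h_p. -/
def Ffun (hp : H4 → Form) (p : H4) : ℝ := ∫ x in ball (0:H4) 1, tnsq (asd (dd (hp p) x))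

/-- The linear Dirichlet problem (D₀): d*dA = 0 in B⁴, ι*A ∼ A₀ at ∂B⁴. -/
def SolvesD0 (A A0 : Form) : Prop :=
  IsSmoothForm A ∧
  (∀ x ∈ ball (0:H4) 1, ∀ j, (∑ i, fderiv ℝ (fun y => dd A y i j) x (e4 i)) = 0) ∧
  BValue A A0

/-- The matrix M(A₀,p), entries m_ij = ∫ ((dA̲₀,_j)⁻,(dh_{p,i})⁻). -/
def Mmat (A0u : Form) (hp : H4 → Form) (p : H4) : Matrix (Fin 3) (Fin 3) ℝ :=
  Matrix.of fun i j => ∫ x in ball (0:H4) 1,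
    (1/2) * ∑ k, ∑ l, (qc3 j (asd (dd A0u x) k l)) * (qc3 i (asd (dd (hp p) x) k l))

/-- μ lists the eigenvalues of MᵀM in decreasing order (with an orthonormal eigenbasis). -/
def IsOrderedEigen (Mm : Matrix (Fin 3) (Fin 3) ℝ) (μ : Fin 3 → ℝ) : Prop :=
  μ 0 ≥ μ 1 ∧ μ 1 ≥ μ 2 ∧ μ 2 ≥ 0 ∧
  ∃ v : Fin 3 → Fin 3 → ℝ,
    (∀ i j, ∑ k, v i k * v j k = if i = j then (1:ℝ) else 0) ∧
    ∀ i, (Mm.transpose * Mm).mulVec (v i) = μ i • v i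

/-! ## Additional shared definitions -/

/-- p₀ is an isolated local maximum point of G in B⁴. -/
def IsIsolatedLocalMax (G : H4 → ℝ) (p0 : H4) : Prop :=
  ∃ r > 0, ∀ p ∈ ball p0 r ∩ ball (0:H4) 1, p ≠ p0 → G p < G p0

/-- p₀ is a non-degenerate critical point of G. -/
def IsNondegCrit (G : H4 → ℝ) (p0 : H4) : Prop :=
  fderiv ℝ G p0 = 0 ∧
  ∀ v : H4, v ≠ 0 → ∃ w : H4, fderiv ℝ (fun p => fderiv ℝ G p w) p0 v ≠ 0

/-- The functions G: combinations (s₁√μ₁ + s₂√μ₂ + s₃√μ₃)²/F(p). -/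
def Gfun (hp : H4 → Form) (μ : H4 → Fin 3 → ℝ) (s1 s2 s3 : ℝ) (p : H4) : ℝ :=
  (s1 * Real.sqrt (μ p 0) + s2 * Real.sqrt (μ p 1) + s3 * Real.sqrt (μ p 2))^2 / Ffun hp p

/-- Gauge equivalence of connections over the closed ball. -/
def GaugeEquiv (A B : Form) : Prop :=
  ∃ u : H4 → H4, IsGauge u ∧ ∀ x ∈ closedBall (0:H4) 1, ∀ i, gaugeAct u A x i = B x i

/-- A minimizes YM_ε restricted to the class 𝒜₊₁(A₀). -/
def IsMinimizingIn (ε : ℝ) (A A0 Asmall : Form) : Prop :=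
  ∀ B : Form, IsSmoothForm B → BValue B A0 → relC2 ε B Asmall = 1 → ym ε A ≤ ym ε B

/-! ## The 1-instanton, cutoffs, and the glued approximate solutions -/

/-- The 1-instanton gauge I²_{λ,p} on ℝ⁴ ∖ {p}. -/
def I2 (lam : ℝ) (p : H4) : Form := fun x i =>
  (lam^2 / (‖x - p‖^2 * (lam^2 + ‖x - p‖^2))) • ((star x - star p) * e4 i).im

/-- The 1-instanton gauge I¹_{λ,p} near p. -/
def I1 (lam : ℝ) (p : H4) : Form := fun x i =>
  ((lam^2 + ‖x - p‖^2)⁻¹) • ((x - p) * star (e4 i)).im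

/-- A radial cutoff function β: 1 on ‖x‖ ≤ 1, 0 on ‖x‖ ≥ 2, with 0 ≤ β ≤ 1. -/
def IsCutoff (β : H4 → ℝ) : Prop :=
  ContDiff ℝ (⊤ : ℕ∞) β ∧ (∀ x : H4, ‖x‖ ≤ 1 → β x = 1) ∧ (∀ x : H4, 2 ≤ ‖x‖ → β x = 0) ∧
  (∀ x, β x ∈ Icc (0:ℝ) 1) ∧ ∀ x y : H4, ‖x‖ = ‖y‖ → β x = β y

/-- The glued approximate solution A(q), q = (p,[g],λ), in the chart B⁴ ∖ {p}:
A(q) = (1−β_{λ,p}) A̲_ε + (1/ε) β_{λ/4,p} g I² g⁻¹ + (1/ε)(1−β_{λ/4,p}) g (I² − h_{λ,p}) g⁻¹. -/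
def Aq (β : H4 → ℝ) (hl : ℝ → H4 → Form) (Asm : Form) (ε lam : ℝ) (p g : H4) : Form :=
  fun x i =>
    (1 - β (lam⁻¹ • (x - p))) • Asm x i
    + ε⁻¹ • ((β ((4:ℝ) • (lam⁻¹ • (x - p)))) • (g * I2 lam p x i * star g))
    + ε⁻¹ • ((1 - β ((4:ℝ) • (lam⁻¹ • (x - p)))) • (g * (I2 lam p x i - hl lam p x i) * star g))

/-- The pure instanton connection Ã(q) on ℝ⁴ ∖ {p} (chart 2 gauge). -/
def Atq (ε lam : ℝ) (p g : H4) : Form := fun x i => ε⁻¹ • (g * I2 lam p x i * star g)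

/-- The parameter space P(d₀,λ₀;D₁,D₂;ε): p ∈ B_{1−d₀}, [g] ∈ SO(3) (g a unit quaternion),
0 < λ < λ₀, D₁ε < λ² < D₂ε. -/
def InP (d0 lam0 D1 D2 ε : ℝ) (p g : H4) (lam : ℝ) : Prop :=
  ‖p‖ < 1 - d0 ∧ ‖g‖ = 1 ∧ 0 < lam ∧ lam < lam0 ∧ D1 * ε < lam^2 ∧ lam^2 < D2 * ε

/-- The cross term ∫ ((F_{A̲₀}⁰)⁻, g (dh_p)⁻ g⁻¹). -/
def crossT (A0u : Form) (hp : H4 → Form) (p g : H4) : ℝ :=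
  ∫ x in ball (0:H4) 1,
    tinner (asd (dd A0u x)) (fun i j => g * asd (dd (hp p) x) i j * star g)

/-! ## Covariant derivatives, norms, gradient and Hessians -/

/-- d_A^ε a for a 1-form a (2-form components). -/
def dA1 (ε : ℝ) (A a : Form) (x : H4) (i j : Fin 4) : H4 :=
  fderiv ℝ (fun y => a y j) x (e4 i) - fderiv ℝ (fun y => a y i) x (e4 j)
    + ε • ((A x i * a x j - a x j * A x i) - (A x j * a x i - a x i * A x j))

/-- Full covariant derivative ∇_A^ε a, components. -/
def covD (ε : ℝ) (A a : Form) (x : H4) (i j : Fin 4) : H4 :=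
  fderiv ℝ (fun y => a y j) x (e4 i) + ε • (A x i * a x j - a x j * A x i)

/-- d_A^{*ε} of a 1-form (an Im ℍ-valued function). -/
def dstar1 (ε : ℝ) (A a : Form) (x : H4) : H4 :=
  ∑ i, (fderiv ℝ (fun y => a y i) x (e4 i) + ε • (A x i * a x i - a x i * A x i))

/-- ‖a‖_{A;1,2} = ‖∇_A^ε a‖_{L²(B⁴)} + ‖a‖_{L²(B⁴)}. -/
def sob2 (ε : ℝ) (A a : Form) : ℝ :=
  Real.sqrt (∫ x in ball (0:H4) 1, ∑ i, ∑ j, nsq (covD ε A a x i j))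
  + Real.sqrt (∫ x in ball (0:H4) 1, ∑ j, nsq (a x j))

/-- The gradient pairing ∇YM_ε(A)(a) = 2∫_{B⁴} (F_A^ε, d_A^ε a). -/
def gYM (ε : ℝ) (A a : Form) : ℝ :=
  2 * ∫ x in ball (0:H4) 1, tinner (curv ε A x) (dA1 ε A a x)

/-- Test 1-forms: smooth, Im ℍ-valued, compactly supported in B⁴. -/
def TestForm (a : Form) : Prop :=
  (∀ i, ContDiff ℝ (⊤ : ℕ∞) (fun x => a x i)) ∧ (∀ x i, (a x i).re = 0) ∧
  ∀ i, tsupport (fun x => a x i) ⊆ ball (0:H4) 1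

/-- The bracket 2-form [a,b], components [a_i,b_j] − [a_j,b_i]. -/
def brk (a b : Form) (x : H4) (i j : Fin 4) : H4 :=
  (a x i * b x j - b x j * a x i) - (a x j * b x i - b x i * a x j)

/-- The Hessian ⟨∇²YM_ε(A)a,b⟩ = 2∫(d_A^ε a, d_A^ε b) + 2∫(F_A^ε, ε[a,b]). -/
def hessYM (ε : ℝ) (A a b : Form) : ℝ :=
  2 * (∫ x in ball (0:H4) 1, tinner (dA1 ε A a x) (dA1 ε A b x))
  + 2 * ∫ x in ball (0:H4) 1, tinner (curv ε A x) (fun i j => ε • brk a b x i j)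

/-- Sum of a connection and a 1-form. -/
def addF (A a : Form) : Form := fun x i => A x i + a x i

/-- Curves in the parameter space: 4 translations, 3 rotations, 1 dilation. -/
def pcurve (p g : H4) (lam : ℝ) (k : Fin 8) (t : ℝ) : H4 × H4 × ℝ :=
  if h : (k : ℕ) < 4 then (p + t • e4 ⟨k, h⟩, g, lam)
  else if h2 : (k : ℕ) < 7 then
    (p, NormedSpace.exp (t • e4 ⟨(k : ℕ) - 3, by omega⟩) * g, lam)
  else (p, g, lam + t)

/-- Derivative of the glued family A(q) along the k-th parameter direction;
these span the tangent space T_{A(q)}N(d₀,λ₀). -/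
def AqPar (β : H4 → ℝ) (hl : ℝ → H4 → Form) (Asm : Form) (ε : ℝ) (p g : H4) (lam : ℝ)
    (k : Fin 8) : Form := fun x i =>
  deriv (fun t => Aq β hl Asm ε (pcurve p g lam k t).2.2 (pcurve p g lam k t).1
    (pcurve p g lam k t).2.1 x i) 0

/-- Derivative of the instanton family Ã(q) along the k-th parameter direction. -/
def AtqPar (ε : ℝ) (p g : H4) (lam : ℝ) (k : Fin 8) : Form := fun x i =>
  deriv (fun t => Atq ε (pcurve p g lam k t).2.2 (pcurve p g lam k t).1
    (pcurve p g lam k t).2.1 x i) 0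

/-- The inner product (α,β)_{A;1,2} = ∫_{B⁴} (∇_A^ε α, ∇_A^ε β) + (α,β). -/
def ip12 (ε : ℝ) (A α β' : Form) : ℝ :=
  (∫ x in ball (0:H4) 1, ∑ i, ∑ j, innerIm (covD ε A α x i j) (covD ε A β' x i j))
  + ∫ x in ball (0:H4) 1, ∑ j, innerIm (α x j) (β' x j)

/-- The modified Hessian H_A(a,b) = ½⟨∇²YM_ε(A)a,b⟩ + (d_A^{*ε}a, d_A^{*ε}b)_{L²}. -/
def modHess (ε : ℝ) (A a b : Form) : ℝ :=
  (1/2) * hessYM ε A a b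
  + ∫ x in ball (0:H4) 1, innerIm (dstar1 ε A a x) (dstar1 ε A b x)

/-- The weight w(x): 1 on ‖x‖ ≤ 1, (1+‖x‖²)⁻² outside. -/
def wgt (x : H4) : ℝ := if ‖x‖ ≤ 1 then 1 else ((1 + ‖x‖^2)^2)⁻¹

/-- The weighted inner product on L²_{1;Ã(q)}(T*ℝ⁴ ⊗ Ad P̃). -/
def ipW (ε : ℝ) (A α β' : Form) : ℝ :=
  (∫ x : H4, ∑ i, ∑ j, innerIm (covD ε A α x i j) (covD ε A β' x i j))
  + ∫ x : H4, wgt x * ∑ j, innerIm (α x j) (β' x j)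

/-! ## L^p norms and the auxiliary equation -/

/-- L^p norm over B⁴ of a scalar function (real exponent). -/
def lpn (pp : ℝ) (f : H4 → ℝ) : ℝ := (∫ x in ball (0:H4) 1, |f x| ^ pp) ^ (1/pp)

/-- ‖a‖_{A;1,p} = ‖∇_A^ε a‖_{L^p(B⁴)} + ‖a‖_{L^p(B⁴)}. -/
def sobP (pp ε : ℝ) (A a : Form) : ℝ :=
  lpn pp (fun x => Real.sqrt (∑ i, ∑ j, nsq (covD ε A a x i j)))
  + lpn pp (fun x => Real.sqrt (∑ j, nsq (a x j)))

/-- Admissible 1-forms: smooth in B⁴, continuous up to ∂B⁴, vanishing on ∂B⁴, Im ℍ-valued. -/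
def AdmissibleForm (a : Form) : Prop :=
  (∀ i, ContDiffOn ℝ (⊤ : ℕ∞) (fun x => a x i) (ball (0:H4) 1)) ∧
  (∀ i, ContinuousOn (fun x => a x i) (closedBall (0:H4) 1)) ∧
  (∀ x ∈ sphere (0:H4) 1, ∀ i, a x i = 0) ∧ (∀ x i, (a x i).re = 0)

/-- The pairing ⟨½∇YM_ε(A+a) + d_{A+a}^ε d_{A+a}^{*ε} a, b⟩ appearing in the
auxiliary equation. -/
def auxPair (ε : ℝ) (A a b : Form) : ℝ :=
  (1/2) * gYM ε (addF A a) b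
  + ∫ x in ball (0:H4) 1, innerIm (dstar1 ε (addF A a) a x) (dstar1 ε (addF A a) b x)

/-! ## Norms for the small-solution estimates -/

/-- Pointwise norm of a 1-form. -/
def ptn (A : Form) (x : H4) : ℝ := Real.sqrt (∑ i, nsq (A x i))
/-- Pointwise norm of the full gradient of a 1-form. -/
def ptg (A : Form) (x : H4) : ℝ :=
  Real.sqrt (∑ i, ∑ j, nsq (fderiv ℝ (fun y => A y j) x (e4 i)))
/-- ‖A‖_{L^p₁(B⁴)} = ‖A‖_{L^p} + ‖∇A‖_{L^p}. -/
def lpW1 (pp : ℝ) (A : Form) : ℝ := lpn pp (ptn A) + lpn pp (ptg A)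
/-- ‖F_A^ε‖_{L^p(B⁴)}. -/
def lpCurv (pp ε : ℝ) (A : Form) : ℝ := lpn pp (fun x => Real.sqrt (tnsq (curv ε A x)))

/-- Tangential projection, extended off the unit sphere. -/
def tProj (y v : H4) : H4 := v - ((⟪y, v⟫) / (⟪y, y⟫)) • y

/-- Tangential divergence d*_τ A_τ at a boundary point. -/
def tDiv (A : Form) (x : H4) : H4 :=
  ∑ i, fderiv ℝ (fun y => evalF A y (tProj y (e4 i))) x (tProj x (e4 i))

/-- The good gauge: d*A = 0 in B⁴ and d*_τ A_τ = 0 on ∂B⁴. -/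
def GoodGauge (A : Form) : Prop :=
  (∀ x ∈ ball (0:H4) 1, ∑ i, fderiv ℝ (fun y => A y i) x (e4 i) = 0) ∧
  (∀ x ∈ sphere (0:H4) 1, tDiv A x = 0)

/-! ## Statement 19 -/

/-- The 1-instanton gauge I¹_{λ,p} evaluated on a tangent vector v. -/
def I1v (lam : ℝ) (p x v : H4) : H4 :=
  ((lam^2 + ‖x - p‖^2)⁻¹) • ((x - p) * star v).im

/-- The 1-instanton gauge I²_{λ,p} evaluated on a tangent vector v. -/
def I2v (lam : ℝ) (p x v : H4) : H4 :=
  (lam^2 / (‖x - p‖^2 * (lam^2 + ‖x - p‖^2))) • ((star x - star p) * v).im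

/-- The transition function g_{12,p}(x) = (x−p)/|x−p| ∈ Sp(1). -/
def g12 (p x : H4) : H4 := (‖x - p‖⁻¹) • (x - p)

/-- Auxiliary quaternion algebra for the gluing relation. -/
lemma key_alg (y v : H4) (r lam : ℝ) (hr0 : 0 < r) (hlam : 0 < lam)
    (hns : Quaternion.normSq y = r ^ 2) :
    (lam ^ 2 / (r ^ 2 * (lam ^ 2 + r ^ 2))) • (star y * v).im
      = (r⁻¹ • star y) * (r⁻¹ • v - ((⟪y, v⟫) / r ^ 3) • y)
        + (r⁻¹ • star y) * ((lam ^ 2 + r ^ 2)⁻¹ • (y * star v).im) * (r⁻¹ • y) := by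
  have hr : r ≠ 0 := ne_of_gt hr0
  have hL : lam ^ 2 + r ^ 2 ≠ 0 := by positivity
  set q : H4 := star y * v with hq
  have hyy : star y * y = ((r ^ 2 : ℝ) : H4) := by
    rw [Quaternion.star_mul_self, hns]
  have hre : ⟪y, v⟫ = q.re := by
    simp only [hq, Quaternion.inner_def, Quaternion.re_mul, Quaternion.re_star,
      Quaternion.imI_star, Quaternion.imJ_star, Quaternion.imK_star]
    ring
  have him : ((q.re : ℝ) : H4) = q - q.im :=
    eq_sub_of_add_eq (Quaternion.re_add_im q)
  have k2 : star y * (y * star v).im * y = (-(r ^ 2)) • q.im := by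
    rw [← hns]
    apply Quaternion.ext <;>
      simp only [hq, Quaternion.normSq_def', Quaternion.re_mul, Quaternion.imI_mul,
        Quaternion.imJ_mul, Quaternion.imK_mul, Quaternion.re_star, Quaternion.imI_star,
        Quaternion.imJ_star, Quaternion.imK_star, Quaternion.re_im, Quaternion.imI_im,
        Quaternion.imJ_im, Quaternion.imK_im, Quaternion.re_smul, Quaternion.imI_smul,
        Quaternion.imJ_smul, Quaternion.imK_smul, smul_eq_mul, neg_mul, neg_neg] <;>
      ring
  have e1 : (r⁻¹ • star y) * (r⁻¹ • v - ((⟪y, v⟫) / r ^ 3) • y) = (r ^ 2)⁻¹ • q.im := by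
    rw [mul_sub]
    simp only [smul_mul_assoc, mul_smul_comm, smul_smul]
    rw [hyy, hre, Quaternion.smul_coe]
    have hc : q.re / r ^ 3 * r⁻¹ * r ^ 2 = r⁻¹ * r⁻¹ * q.re := by
      field_simp
    rw [hc, ← Quaternion.smul_coe, him, ← smul_sub, sub_sub_cancel]
    congr 1
    rw [sq, mul_inv]
  have e2 : (r⁻¹ • star y) * ((lam ^ 2 + r ^ 2)⁻¹ • (y * star v).im) * (r⁻¹ • y)
      = (-(lam ^ 2 + r ^ 2)⁻¹) • q.im := by
    simp only [smul_mul_assoc, mul_smul_comm, smul_smul]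
    rw [k2, smul_smul]
    congr 1
    field_simp
  rw [e1, e2, ← add_smul]
  congr 1
  field_simp
  ring

/-- The differential of the transition function. -/
lemma g12_fderiv (p x : H4) (hx0 : 0 < ‖x - p‖) (v : H4) :
    fderiv ℝ (g12 p) x v
      = ‖x - p‖⁻¹ • v - ((⟪x - p, v⟫) / ‖x - p‖ ^ 3) • (x - p) := by
  set y := x - p with hy
  set r := ‖y‖ with hrdef
  have hr : r ≠ 0 := ne_of_gt hx0
  have ht : ⟪y, y⟫ = r ^ 2 := real_inner_self_eq_norm_sq y
  have ht0 : ⟪y, y⟫ ≠ 0 := by rw [ht]; positivity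
  have hsq : Real.sqrt ⟪y, y⟫ = r := by rw [ht]; exact Real.sqrt_sq hx0.le
  have hsub : HasFDerivAt (fun z : H4 => z - p) (ContinuousLinearMap.id ℝ H4) x :=
    (hasFDerivAt_id x).sub_const p
  have hn : HasFDerivAt (fun z : H4 => ⟪z - p, z - p⟫)
      ((fderivInnerCLM ℝ (y, y)).comp
        ((ContinuousLinearMap.id ℝ H4).prod (ContinuousLinearMap.id ℝ H4))) x :=
    hsub.inner ℝ hsub
  have h1 : HasDerivAt (fun t : ℝ => (Real.sqrt t)⁻¹)
      (-(1 / (2 * Real.sqrt ⟪y, y⟫)) / (Real.sqrt ⟪y, y⟫) ^ 2) ⟪y, y⟫ :=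
    (Real.hasDerivAt_sqrt ht0).inv (by rw [hsq]; exact hr)
  have hc : HasFDerivAt (fun z : H4 => ‖z - p‖⁻¹)
      ((-(1 / (2 * r)) / r ^ 2) • ((fderivInnerCLM ℝ (y, y)).comp
        ((ContinuousLinearMap.id ℝ H4).prod (ContinuousLinearMap.id ℝ H4)))) x := by
    have h2 := h1.comp_hasFDerivAt x hn
    simp only [Function.comp_def, hsq] at h2
    simpa only [norm_eq_sqrt_real_inner] using h2
  have hg : HasFDerivAt (g12 p)
      ((r⁻¹ : ℝ) • ContinuousLinearMap.id ℝ H4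
        + ((-(1 / (2 * r)) / r ^ 2) • ((fderivInnerCLM ℝ (y, y)).comp
           ((ContinuousLinearMap.id ℝ H4).prod (ContinuousLinearMap.id ℝ H4)))).smulRight y) x :=
    hc.smul hsub
  rw [hg.fderiv]
  simp only [ContinuousLinearMap.add_apply, ContinuousLinearMap.smul_apply,
    ContinuousLinearMap.coe_smul', Pi.smul_apply, ContinuousLinearMap.smulRight_apply,
    ContinuousLinearMap.comp_apply, ContinuousLinearMap.prod_apply,
    ContinuousLinearMap.coe_id', id_eq, fderivInnerCLM_apply]
  rw [real_inner_comm v y]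
  rw [sub_eq_add_neg, ← neg_smul]
  congr 1
  field_simp
  ring

/-- **Gluing relation for the 1-instanton.** On the overlap 0 < |x−p| < 1 one has
I²_{λ,p} = g_{12,p}⁻¹ dg_{12,p} + g_{12,p}⁻¹ I¹_{λ,p} g_{12,p}. -/
theorem instanton_gluing_relation
    (p : H4) (lam : ℝ) (hlam : 0 < lam)
    (x : H4) (hx0 : 0 < ‖x - p‖) (hx1 : ‖x - p‖ < 1) (v : H4) :
    I2v lam p x v
      = (g12 p x)⁻¹ * fderiv ℝ (g12 p) x v
        + (g12 p x)⁻¹ * I1v lam p x v * g12 p x := by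
  have hginv : (g12 p x)⁻¹ = ‖x - p‖⁻¹ • star (x - p) := by
    rw [show g12 p x = ‖x - p‖⁻¹ • (x - p) from rfl, Quaternion.inv_def,
      Quaternion.normSq_smul, Quaternion.star_smul]
    rw [show Quaternion.normSq (x - p) = ‖x - p‖ ^ 2 from by
      rw [Quaternion.normSq_eq_norm_mul_self]; ring]
    rw [show (‖x - p‖⁻¹ ^ 2 * ‖x - p‖ ^ 2)⁻¹ = 1 from by
      field_simp]
    rw [one_smul]
  rw [g12_fderiv p x hx0 v, hginv]
  simp only [I2v, I1v, g12]
  rw [show star x - star p = star (x - p) from (star_sub x p).symm]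
  exact key_alg (x - p) v ‖x - p‖ lam hx0 hlam
    (by rw [Quaternion.normSq_eq_norm_mul_self]; ring)
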